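/- arXiv:1711.09628 — 2 statements merged into one kernel-verified Lean document; each statement's English description precedes it below -/
import Mathlib

section
/- Let F be a convex class of probability measures on Ω and let T : F → A ⊆ ℝ^k be mixture-continuous and surjective onto A. Let S : A × Ω → ℝ be strictly F-consistent for T. Then for each F ∈ F with t = T(F) and each x ∈ A with x ≠ t, there is a continuous path γ : [0,1] → A with γ(0) = x, γ(1) = t such that the function λ ↦ S̄(γ(λ),F) is decreasing on [0,1]; moreover, for 0 ≤ λ < λ′ ≤ 1 with γ(λ) ≠ γ(λ′) it holds that S̄(γ(λ),F) > S̄(γ(λ′),F). -/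
open MeasureTheory ENNReal

noncomputable def escore {α Ω : Type*} [MeasurableSpace Ω]
    (S : α → Ω → ℝ) (x : α) (F : Measure Ω) : ℝ :=
  ∫ y, S x y ∂F

/-- The mixture `(1 - lam) • F + lam • G` of two measures. -/
noncomputable def mix {Ω : Type*} [MeasurableSpace Ω]
    (F G : Measure Ω) (lam : ℝ) : Measure Ω :=
  ENNReal.ofReal (1 - lam) • F + ENNReal.ofReal lam • G

/-- The class `𝓕` is convex (closed under mixtures). -/
def MixConvex {Ω : Type*} [MeasurableSpace Ω] (𝓕 : Set (Measure Ω)) : Prop :=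
  ∀ F ∈ 𝓕, ∀ G ∈ 𝓕, ∀ lam ∈ Set.Icc (0:ℝ) 1, mix F G lam ∈ 𝓕

/-- `S` is an `𝓕`-consistent scoring function for `T` on the action domain `A`. -/
def Consistent {α Ω : Type*} [MeasurableSpace Ω]
    (𝓕 : Set (Measure Ω)) (A : Set α) (T : Measure Ω → α) (S : α → Ω → ℝ) : Prop :=
  ∀ F ∈ 𝓕, ∀ x ∈ A, escore S (T F) F ≤ escore S x F

/-- `S` is a strictly `𝓕`-consistent scoring function for `T` on the action domain `A`. -/
def StrictlyConsistent {α Ω : Type*} [MeasurableSpace Ω]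
    (𝓕 : Set (Measure Ω)) (A : Set α) (T : Measure Ω → α) (S : α → Ω → ℝ) : Prop :=
  Consistent 𝓕 A T S ∧
    ∀ F ∈ 𝓕, ∀ x ∈ A, escore S x F = escore S (T F) F → x = T F

/-- `T` is mixture-continuous: `fun lam => T ((1-lam) • F + lam • G)` is continuous on `[0,1]`. -/
def MixContinuous {Ω : Type*} [MeasurableSpace Ω] {k : ℕ}
    (𝓕 : Set (Measure Ω)) (T : Measure Ω → (Fin k → ℝ)) : Prop :=
  ∀ F ∈ 𝓕, ∀ G ∈ 𝓕, ContinuousOn (fun lam => T (mix F G lam)) (Set.Icc (0:ℝ) 1)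

/-!
For `x = T G`, follow `γ lam = T (mix G F lam)` from `G` to `F`. The expected score under a
mixture is affine in the weight, so consistency of `t = γ lam` at `mix G F lam` and of
`t' = γ lam'` at `mix G F lam'` are two linear inequalities between the scores of `t`, `t'`
under `G` and `F`. Combining them with weights `1 - lam` and `1 - lam'` eliminates the
`G`-scores and leaves `(lam' - lam) * (S̄(t, F) - S̄(t', F)) ≥ 0`, strictly if `t ≠ t'`.
-/

lemma integral_mix {E : Type*} [NormedAddCommGroup E] [NormedSpace ℝ E]
    {Ω : Type*} [MeasurableSpace Ω] {F G : Measure Ω} {f : Ω → E}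
    (hF : Integrable f F) (hG : Integrable f G) {lam : ℝ} (hlam : lam ∈ Set.Icc (0:ℝ) 1) :
    ∫ y, f y ∂(mix F G lam) = (1 - lam) • ∫ y, f y ∂F + lam • ∫ y, f y ∂G := by
  rw [mix, integral_add_measure (hF.smul_measure ofReal_ne_top) (hG.smul_measure ofReal_ne_top),
    integral_smul_measure, integral_smul_measure, toReal_ofReal (sub_nonneg.2 hlam.2),
    toReal_ofReal hlam.1]

lemma le_of_mix_le_of_mix_le {a b c d lam lam' : ℝ} (hlt : lam < lam') (hlam' : lam' ≤ 1)
    (h : (1 - lam) * a + lam * b ≤ (1 - lam) * c + lam * d)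
    (h' : (1 - lam') * c + lam' * d ≤ (1 - lam') * a + lam' * b) : d ≤ b := by
  nlinarith [mul_nonneg (sub_nonneg.2 hlam') (sub_nonneg.2 hlt.le)]

lemma lt_of_mix_lt_of_mix_lt {a b c d lam lam' : ℝ} (hlt : lam < lam') (hlam' : lam' ≤ 1)
    (h : (1 - lam) * a + lam * b < (1 - lam) * c + lam * d)
    (h' : (1 - lam') * c + lam' * d < (1 - lam') * a + lam' * b) : d < b := by
  nlinarith [mul_nonneg (sub_nonneg.2 hlam') (sub_nonneg.2 hlt.le)]

section Mixture

variable {α Ω : Type*} [MeasurableSpace Ω] {𝓕 : Set (Measure Ω)} {A : Set α}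
  {T : Measure Ω → α} {S : α → Ω → ℝ} {F G : Measure Ω}

lemma escore_mix (hSint : ∀ x ∈ A, ∀ F ∈ 𝓕, Integrable (S x) F) (hF : F ∈ 𝓕) (hG : G ∈ 𝓕)
    {x : α} (hx : x ∈ A) {lam : ℝ} (hlam : lam ∈ Set.Icc (0:ℝ) 1) :
    escore S x (mix F G lam) = (1 - lam) * escore S x F + lam * escore S x G :=
  integral_mix (hSint x hx F hF) (hSint x hx G hG) hlam

lemma Consistent.escore_le_at_mix (hS : Consistent 𝓕 A T S) (hconv : MixConvex 𝓕)
    (hTA : ∀ F ∈ 𝓕, T F ∈ A) (hSint : ∀ x ∈ A, ∀ F ∈ 𝓕, Integrable (S x) F)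
    (hF : F ∈ 𝓕) (hG : G ∈ 𝓕) {lam : ℝ} (hlam : lam ∈ Set.Icc (0:ℝ) 1) {x : α} (hx : x ∈ A) :
    (1 - lam) * escore S (T (mix F G lam)) F + lam * escore S (T (mix F G lam)) G ≤
      (1 - lam) * escore S x F + lam * escore S x G := by
  have hmem := hconv F hF G hG lam hlam
  rw [← escore_mix hSint hF hG (hTA _ hmem) hlam, ← escore_mix hSint hF hG hx hlam]
  exact hS _ hmem x hx

lemma StrictlyConsistent.escore_lt_at_mix (hS : StrictlyConsistent 𝓕 A T S)
    (hconv : MixConvex 𝓕) (hTA : ∀ F ∈ 𝓕, T F ∈ A)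
    (hSint : ∀ x ∈ A, ∀ F ∈ 𝓕, Integrable (S x) F)
    (hF : F ∈ 𝓕) (hG : G ∈ 𝓕) {lam : ℝ} (hlam : lam ∈ Set.Icc (0:ℝ) 1) {x : α} (hx : x ∈ A)
    (hne : x ≠ T (mix F G lam)) :
    (1 - lam) * escore S (T (mix F G lam)) F + lam * escore S (T (mix F G lam)) G <
      (1 - lam) * escore S x F + lam * escore S x G := by
  have hmem := hconv F hF G hG lam hlam
  rw [← escore_mix hSint hF hG (hTA _ hmem) hlam, ← escore_mix hSint hF hG hx hlam]
  exact (hS.1 _ hmem x hx).lt_of_ne fun h => hne (hS.2 _ hmem x hx h.symm)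

lemma Consistent.escore_functional_mix_antitoneOn (hS : Consistent 𝓕 A T S)
    (hconv : MixConvex 𝓕) (hTA : ∀ F ∈ 𝓕, T F ∈ A)
    (hSint : ∀ x ∈ A, ∀ F ∈ 𝓕, Integrable (S x) F) (hG : G ∈ 𝓕) (hF : F ∈ 𝓕) :
    AntitoneOn (fun lam => escore S (T (mix G F lam)) F) (Set.Icc (0:ℝ) 1) := by
  intro lam hlam lam' hlam' hle
  rcases hle.eq_or_lt with rfl | hlt
  · rfl
  have hmem {μ : ℝ} (hμ : μ ∈ Set.Icc (0:ℝ) 1) := hTA _ (hconv G hG F hF μ hμ)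
  exact le_of_mix_le_of_mix_le hlt hlam'.2
    (hS.escore_le_at_mix hconv hTA hSint hG hF hlam (hmem hlam'))
    (hS.escore_le_at_mix hconv hTA hSint hG hF hlam' (hmem hlam))

lemma StrictlyConsistent.escore_functional_mix_lt (hS : StrictlyConsistent 𝓕 A T S)
    (hconv : MixConvex 𝓕) (hTA : ∀ F ∈ 𝓕, T F ∈ A)
    (hSint : ∀ x ∈ A, ∀ F ∈ 𝓕, Integrable (S x) F) (hG : G ∈ 𝓕) (hF : F ∈ 𝓕)
    {lam lam' : ℝ} (hlam : lam ∈ Set.Icc (0:ℝ) 1) (hlam' : lam' ∈ Set.Icc (0:ℝ) 1)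
    (hlt : lam < lam') (hne : T (mix G F lam) ≠ T (mix G F lam')) :
    escore S (T (mix G F lam')) F < escore S (T (mix G F lam)) F := by
  have hmem {μ : ℝ} (hμ : μ ∈ Set.Icc (0:ℝ) 1) := hTA _ (hconv G hG F hF μ hμ)
  exact lt_of_mix_lt_of_mix_lt hlt hlam'.2
    (hS.escore_lt_at_mix hconv hTA hSint hG hF hlam (hmem hlam') hne.symm)
    (hS.escore_lt_at_mix hconv hTA hSint hG hF hlam' (hmem hlam) hne)

end Mixture

theorem statement2_general {Ω : Type*} [MeasurableSpace Ω] {k : ℕ}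
    (𝓕 : Set (Measure Ω))
    (hconv : MixConvex 𝓕)
    (A : Set (Fin k → ℝ)) (T : Measure Ω → (Fin k → ℝ))
    (hTA : ∀ F ∈ 𝓕, T F ∈ A)
    (hmix : MixContinuous 𝓕 T)
    (hsurj : ∀ x ∈ A, ∃ F ∈ 𝓕, T F = x)
    (S : (Fin k → ℝ) → Ω → ℝ)
    (hSint : ∀ x ∈ A, ∀ F ∈ 𝓕, Integrable (S x) F)
    (hS : StrictlyConsistent 𝓕 A T S)
    (F : Measure Ω) (hF : F ∈ 𝓕)
    (x : Fin k → ℝ) (hx : x ∈ A) :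
    ∃ γ : ℝ → (Fin k → ℝ),
      ContinuousOn γ (Set.Icc (0:ℝ) 1) ∧
      (∀ lam ∈ Set.Icc (0:ℝ) 1, γ lam ∈ A) ∧
      γ 0 = x ∧ γ 1 = T F ∧
      AntitoneOn (fun lam => escore S (γ lam) F) (Set.Icc (0:ℝ) 1) ∧
      (∀ lam ∈ Set.Icc (0:ℝ) 1, ∀ lam' ∈ Set.Icc (0:ℝ) 1,
        lam < lam' → γ lam ≠ γ lam' →
          escore S (γ lam') F < escore S (γ lam) F) := by
  obtain ⟨G, hG, rfl⟩ := hsurj x hx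
  exact ⟨fun lam => T (mix G F lam), hmix G hG F hF,
    fun lam hlam => hTA _ (hconv G hG F hF lam hlam), by simp [mix], by simp [mix],
    hS.1.escore_functional_mix_antitoneOn hconv hTA hSint hG hF,
    fun _ hlam _ hlam' => hS.escore_functional_mix_lt hconv hTA hSint hG hF hlam hlam'⟩

/-- For a strictly `𝓕`-consistent scoring function `S` of a
mixture-continuous surjective functional `T`, for every `F ∈ 𝓕` and `x ∈ A`, `x ≠ T F`,
there is a continuous path from `x` to `T F` along which the expected score decreases,
strictly so between points where the path takes different values. -/
theorem statement2 {Ω : Type*} [MeasurableSpace Ω] {k : ℕ}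
    (𝓕 : Set (Measure Ω)) (hprob : ∀ F ∈ 𝓕, IsProbabilityMeasure F)
    (hconv : MixConvex 𝓕)
    (A : Set (Fin k → ℝ)) (T : Measure Ω → (Fin k → ℝ))
    (hTA : ∀ F ∈ 𝓕, T F ∈ A)
    (hmix : MixContinuous 𝓕 T)
    (hsurj : ∀ x ∈ A, ∃ F ∈ 𝓕, T F = x)
    (S : (Fin k → ℝ) → Ω → ℝ)
    (hSint : ∀ x ∈ A, ∀ F ∈ 𝓕, Integrable (S x) F)
    (hS : StrictlyConsistent 𝓕 A T S)
    (F : Measure Ω) (hF : F ∈ 𝓕)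
    (x : Fin k → ℝ) (hx : x ∈ A) (hxne : x ≠ T F) :
    ∃ γ : ℝ → (Fin k → ℝ),
      ContinuousOn γ (Set.Icc (0:ℝ) 1) ∧
      (∀ lam ∈ Set.Icc (0:ℝ) 1, γ lam ∈ A) ∧
      γ 0 = x ∧ γ 1 = T F ∧
      AntitoneOn (fun lam => escore S (γ lam) F) (Set.Icc (0:ℝ) 1) ∧
      (∀ lam ∈ Set.Icc (0:ℝ) 1, ∀ lam' ∈ Set.Icc (0:ℝ) 1,
        lam < lam' → γ lam ≠ γ lam' →
          escore S (γ lam') F < escore S (γ lam) F) :=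
  statement2_general 𝓕 hconv A T hTA hmix hsurj S hSint hS F hF x hx
end

section
/- Let T : F → A ⊆ ℝ^k be a ratio of expectations with the same denominator, T(F) = p̄(F)/q̄(F), where p : Ω → ℝ^k and q : Ω → ℝ are F-integrable with q̄(F) := E_F[q(Y)] > 0 for all F ∈ F, and A is open and convex. Let φ : A → ℝ be a strictly convex differentiable function with gradient ∇φ. Then the scoring function S(x,y) = −φ(x) q(y) + ∇φ(x)·(q(y) x − p(y)) is strictly F-order-sensitive on line segments for T. -/
open MeasureTheory ENNReal

/-- The `ℓ^p`-norm on `ℝ^k`, for `p ∈ [1, ∞]` (given as an extended real). -/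
noncomputable def lpNorm {k : ℕ} (p : ℝ≥0∞) (x : Fin k → ℝ) : ℝ :=
  if p = ⊤ then ⨆ i, |x i| else (∑ i, |x i| ^ p.toReal) ^ (1 / p.toReal)

/-- `S` is metrically `𝓕`-order-sensitive for `T` relative to the norm `nrm`. -/
def MetricallyOS {α Ω : Type*} [MeasurableSpace Ω] [Sub α]
    (𝓕 : Set (Measure Ω)) (A : Set α) (T : Measure Ω → α)
    (S : α → Ω → ℝ) (nrm : α → ℝ) : Prop :=
  ∀ F ∈ 𝓕, ∀ x ∈ A, ∀ z ∈ A,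
    nrm (x - T F) ≤ nrm (z - T F) → escore S x F ≤ escore S z F

/-- `S` is strictly metrically `𝓕`-order-sensitive for `T` relative to the norm `nrm`. -/
def StrictlyMetricallyOS {α Ω : Type*} [MeasurableSpace Ω] [Sub α]
    (𝓕 : Set (Measure Ω)) (A : Set α) (T : Measure Ω → α)
    (S : α → Ω → ℝ) (nrm : α → ℝ) : Prop :=
  MetricallyOS 𝓕 A T S nrm ∧
    ∀ F ∈ 𝓕, ∀ x ∈ A, ∀ z ∈ A,
      nrm (x - T F) < nrm (z - T F) → escore S x F < escore S z F

/-- `S` is `𝓕`-order-sensitive on line segments for `T`: for every unit vector `v`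
(with respect to the Euclidean norm), `s ↦ S̄(T F + s • v, F)` is increasing on
`{s ∈ [0,∞) : T F + s • v ∈ A}`. -/
def LineSegmentOS {Ω : Type*} [MeasurableSpace Ω] {k : ℕ}
    (𝓕 : Set (Measure Ω)) (A : Set (Fin k → ℝ)) (T : Measure Ω → (Fin k → ℝ))
    (S : (Fin k → ℝ) → Ω → ℝ) : Prop :=
  ∀ F ∈ 𝓕, ∀ v : Fin k → ℝ, lpNorm 2 v = 1 →
    MonotoneOn (fun s => escore S (T F + s • v) F)
      {s : ℝ | 0 ≤ s ∧ T F + s • v ∈ A}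

/-- `S` is strictly `𝓕`-order-sensitive on line segments for `T`. -/
def StrictlyLineSegmentOS {Ω : Type*} [MeasurableSpace Ω] {k : ℕ}
    (𝓕 : Set (Measure Ω)) (A : Set (Fin k → ℝ)) (T : Measure Ω → (Fin k → ℝ))
    (S : (Fin k → ℝ) → Ω → ℝ) : Prop :=
  ∀ F ∈ 𝓕, ∀ v : Fin k → ℝ, lpNorm 2 v = 1 →
    StrictMonoOn (fun s => escore S (T F + s • v) F)
      {s : ℝ | 0 ≤ s ∧ T F + s • v ∈ A}

/-- The continuous linear map `w ↦ ∑ i, g i * w i`, used to express gradients on `ℝ^k`. -/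
noncomputable def dotCLM {k : ℕ} (g : Fin k → ℝ) : (Fin k → ℝ) →L[ℝ] ℝ :=
  ∑ i, g i • (ContinuousLinearMap.proj i : (Fin k → ℝ) →L[ℝ] ℝ)

/-! Write `t = T F` and `Q = q̄(F) > 0`. Since `p̄(F) = Q t`, the expected score is
`Q (∇φ(x)·(x - t) - φ(x))`, which along the ray `x = t + s v` becomes `Q (s g'(s) - g(s))` for the
strictly convex `g(s) = φ(t + s v)`. For `0 ≤ s₁ < s₂`, strict convexity gives both
`g(s₂) - g(s₁) < g'(s₂) (s₂ - s₁)` and `g'(s₁) ≤ g'(s₂)`, so `s g'(s) - g(s)` strictly increases. -/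

theorem StrictConvexOn.comp_affineMap_of_injective {𝕜 E F β : Type*} [Field 𝕜] [LinearOrder 𝕜]
    [IsStrictOrderedRing 𝕜] [AddCommGroup E] [AddCommGroup F] [Module 𝕜 E] [Module 𝕜 F]
    [AddCommMonoid β] [PartialOrder β] [SMul 𝕜 β] {f : F → β} {s : Set F}
    (hf : StrictConvexOn 𝕜 s f) (g : E →ᵃ[𝕜] F) (hg : Function.Injective g) :
    StrictConvexOn 𝕜 (g ⁻¹' s) (f ∘ g) :=
  ⟨hf.1.affine_preimage _, fun x hx y hy hxy a b ha hb hab =>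
    calc
      (f ∘ g) (a • x + b • y) = f (a • g x + b • g y) := by
        rw [Function.comp_apply, Convex.combo_affine_apply hab]
      _ < a • f (g x) + b • f (g y) := hf.2 hx hy (hg.ne hxy) ha hb hab⟩

theorem StrictConvexOn.comp_add_smul {E : Type*} [AddCommGroup E] [Module ℝ E] {A : Set E}
    {φ : E → ℝ} (hφ : StrictConvexOn ℝ A φ) (t : E) {v : E} (hv : v ≠ 0) :
    StrictConvexOn ℝ {s : ℝ | t + s • v ∈ A} (fun s => φ (t + s • v)) := by
  let g : ℝ →ᵃ[ℝ] E := AffineMap.const ℝ ℝ t + (LinearMap.toSpanSingleton ℝ E v).toAffineMap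
  have hinj : Function.Injective g := fun s₁ s₂ h => smul_left_injective ℝ hv (add_left_cancel h)
  exact hφ.comp_affineMap_of_injective g hinj

theorem StrictConvexOn.strictMonoOn_mul_deriv_sub {S : Set ℝ} {f f' : ℝ → ℝ}
    (hf : StrictConvexOn ℝ S f) (hf' : ∀ x ∈ S, HasDerivAt f (f' x) x) :
    StrictMonoOn (fun x => x * f' x - f x) (S ∩ Set.Ici 0) := by
  rintro x ⟨hxS, hx0⟩ y ⟨hyS, -⟩ hxy
  have hlo : f' x < slope f x y := hf.lt_slope_of_hasDerivAt hxS hyS hxy (hf' x hxS)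
  have hhi : slope f x y < f' y := hf.slope_lt_of_hasDerivAt hxS hyS hxy (hf' y hyS)
  rw [slope_def_field] at hlo hhi
  have hyx : 0 < y - x := sub_pos.2 hxy
  have hsecant : f y - f x < f' y * (y - x) := (div_lt_iff₀ hyx).1 hhi
  have hderiv : f' x ≤ f' y := (hlo.trans hhi).le
  nlinarith [mul_le_mul_of_nonneg_left hderiv (Set.mem_Ici.1 hx0)]

theorem lpNorm_zero {k : ℕ} {p : ℝ≥0∞} (hp : p ≠ 0) : _root_.lpNorm p (0 : Fin k → ℝ) = 0 := by
  unfold _root_.lpNorm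
  split_ifs with htop
  · simp
  · have hr : p.toReal ≠ 0 := ENNReal.toReal_ne_zero.2 ⟨hp, htop⟩
    simp [Real.zero_rpow hr, hr]

theorem dotCLM_apply {k : ℕ} (g w : Fin k → ℝ) : dotCLM g w = ∑ i, g i * w i := by
  simp [dotCLM]

theorem HasFDerivAt.hasDerivAt_comp_add_smul {k : ℕ} {φ : (Fin k → ℝ) → ℝ}
    {g t v : Fin k → ℝ} {s : ℝ} (hφ : HasFDerivAt φ (dotCLM g) (t + s • v)) :
    HasDerivAt (fun s : ℝ => φ (t + s • v)) (∑ i, g i * v i) s := by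
  have hline : HasDerivAt (fun s : ℝ => t + s • v) v s := by
    simpa using ((hasDerivAt_id s).smul_const v).const_add t
  rw [← dotCLM_apply]
  exact hφ.comp_hasDerivAt s hline

def ratioScore {Ω : Type*} {k : ℕ} (φ : (Fin k → ℝ) → ℝ) (Dφ : (Fin k → ℝ) → (Fin k → ℝ))
    (p : Ω → (Fin k → ℝ)) (q : Ω → ℝ) (x : Fin k → ℝ) (y : Ω) : ℝ :=
  -(φ x) * q y + ∑ i, Dφ x i * (q y * x i - p y i)

theorem escore_ratioScore {Ω : Type*} [MeasurableSpace Ω] {k : ℕ} {F : Measure Ω}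
    (φ : (Fin k → ℝ) → ℝ) (Dφ : (Fin k → ℝ) → (Fin k → ℝ))
    {p : Ω → (Fin k → ℝ)} {q : Ω → ℝ} (hp : Integrable p F) (hq : Integrable q F)
    (x : Fin k → ℝ) :
    escore (ratioScore φ Dφ p q) x F =
      -(φ x) * ∫ y, q y ∂F + ∑ i, Dφ x i * ((∫ y, q y ∂F) * x i - ∫ y, p y i ∂F) := by
  have hpi : ∀ i, Integrable (fun y => p y i) F := fun i =>
    (ContinuousLinearMap.proj (R := ℝ) (φ := fun _ : Fin k => ℝ) i).integrable_comp hp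
  have hterm : ∀ i, Integrable (fun y => Dφ x i * (q y * x i - p y i)) F := fun i =>
    ((hq.mul_const _).sub (hpi i)).const_mul _
  unfold escore ratioScore
  rw [integral_add (hq.const_mul _) (integrable_finsetSum _ fun i _ => hterm i),
    integral_const_mul, integral_finsetSum _ fun i _ => hterm i]
  congr 1
  refine Finset.sum_congr rfl fun i _ => ?_
  rw [integral_const_mul, integral_sub (hq.mul_const _) (hpi i), integral_mul_const]

theorem escore_ratioScore_add_smul {Ω : Type*} [MeasurableSpace Ω] {k : ℕ} {F : Measure Ω}
    (φ : (Fin k → ℝ) → ℝ) (Dφ : (Fin k → ℝ) → (Fin k → ℝ))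
    {p : Ω → (Fin k → ℝ)} {q : Ω → ℝ} (hp : Integrable p F) (hq : Integrable q F)
    {t : Fin k → ℝ} (hmean : ∀ i, ∫ y, p y i ∂F = (∫ y, q y ∂F) * t i) (v : Fin k → ℝ) (s : ℝ) :
    escore (ratioScore φ Dφ p q) (t + s • v) F =
      (∫ y, q y ∂F) * (s * ∑ i, Dφ (t + s • v) i * v i - φ (t + s • v)) := by
  have hsum : ∑ i, Dφ (t + s • v) i * ((∫ y, q y ∂F) * (t + s • v) i - ∫ y, p y i ∂F) =
      (∫ y, q y ∂F) * (s * ∑ i, Dφ (t + s • v) i * v i) := by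
    rw [Finset.mul_sum, Finset.mul_sum]
    refine Finset.sum_congr rfl fun i _ => ?_
    simp only [hmean, Pi.add_apply, Pi.smul_apply, smul_eq_mul]
    ring
  rw [escore_ratioScore φ Dφ hp hq, hsum]
  ring

theorem statement16_general {Ω : Type*} [MeasurableSpace Ω] {k : ℕ}
    (𝓕 : Set (Measure Ω))
    (p : Ω → (Fin k → ℝ)) (q : Ω → ℝ)
    (hpint : ∀ F ∈ 𝓕, Integrable p F) (hqint : ∀ F ∈ 𝓕, Integrable q F)
    (hqpos : ∀ F ∈ 𝓕, 0 < ∫ y, q y ∂F)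
    (A : Set (Fin k → ℝ))
    (T : Measure Ω → (Fin k → ℝ))
    (hT : ∀ F ∈ 𝓕, T F = fun m => (∫ y, p y m ∂F) / (∫ y, q y ∂F))
    (φ : (Fin k → ℝ) → ℝ) (Dφ : (Fin k → ℝ) → (Fin k → ℝ))
    (hφconv : StrictConvexOn ℝ A φ)
    (hφdiff : ∀ x ∈ A, HasFDerivAt φ (dotCLM (Dφ x)) x)
    (S : (Fin k → ℝ) → Ω → ℝ)
    (hSform : ∀ (x : Fin k → ℝ) (y : Ω),
      S x y = -(φ x) * q y + ∑ i, Dφ x i * (q y * x i - p y i)) :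
    StrictlyLineSegmentOS 𝓕 A T S := by
  obtain rfl : S = ratioScore φ Dφ p q := funext₂ hSform
  intro F hF v hv
  have hQ : 0 < ∫ y, q y ∂F := hqpos F hF
  have hv0 : v ≠ 0 := by
    rintro rfl
    simp [_root_.lpNorm_zero two_ne_zero] at hv
  have hmean : ∀ i, ∫ y, p y i ∂F = (∫ y, q y ∂F) * T F i := fun i => by
    rw [hT F hF, mul_div_cancel₀ _ hQ.ne']
  have hline := (hφconv.comp_add_smul (T F) hv0).strictMonoOn_mul_deriv_sub
    fun s hs => (hφdiff _ hs).hasDerivAt_comp_add_smul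
  intro s₁ hs₁ s₂ hs₂ hlt
  simp only [escore_ratioScore_add_smul φ Dφ (hpint F hF) (hqint F hF) hmean]
  exact mul_lt_mul_of_pos_left (hline ⟨hs₁.2, hs₁.1⟩ ⟨hs₂.2, hs₂.1⟩ hlt) hQ

/-- For a ratio of expectations with the same denominator
`T(F) = p̄(F)/q̄(F)` (with `q̄(F) > 0`) on an open convex action domain `A`, and a strictly
convex differentiable `φ` with gradient `Dφ`, the scoring function
`S(x,y) = −φ(x) q(y) + ∇φ(x)·(q(y) x − p(y))` is strictly `𝓕`-order-sensitive on line
segments for `T`. -/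
theorem statement16 {Ω : Type*} [MeasurableSpace Ω] {k : ℕ}
    (𝓕 : Set (Measure Ω)) (hprob : ∀ F ∈ 𝓕, IsProbabilityMeasure F)
    (p : Ω → (Fin k → ℝ)) (q : Ω → ℝ)
    (hpint : ∀ F ∈ 𝓕, Integrable p F) (hqint : ∀ F ∈ 𝓕, Integrable q F)
    (hqpos : ∀ F ∈ 𝓕, 0 < ∫ y, q y ∂F)
    (A : Set (Fin k → ℝ)) (hAopen : IsOpen A) (hAconv : Convex ℝ A)
    (T : Measure Ω → (Fin k → ℝ))
    (hT : ∀ F ∈ 𝓕, T F = fun m => (∫ y, p y m ∂F) / (∫ y, q y ∂F))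
    (hTA : ∀ F ∈ 𝓕, T F ∈ A)
    (φ : (Fin k → ℝ) → ℝ) (Dφ : (Fin k → ℝ) → (Fin k → ℝ))
    (hφconv : StrictConvexOn ℝ A φ)
    (hφdiff : ∀ x ∈ A, HasFDerivAt φ (dotCLM (Dφ x)) x)
    (S : (Fin k → ℝ) → Ω → ℝ)
    (hSform : ∀ (x : Fin k → ℝ) (y : Ω),
      S x y = -(φ x) * q y + ∑ i, Dφ x i * (q y * x i - p y i)) :
    StrictlyLineSegmentOS 𝓕 A T S :=
  statement16_general 𝓕 p q hpint hqint hqpos A T hT φ Dφ hφconv hφdiff S hSform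
end
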